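/- For any tetrahedron K in R^3 with vertices a, b, c, d, the quality measure q(K) = 72√3·|K| / (Σ_{i=1}^{6} s(e_i)^2)^{3/2}, where |K| is the volume of K and s(e_i) are the lengths of the six edges, satisfies 0 ≤ q(K) ≤ 1. -/
import Mathlib

noncomputable def tetVol (a b c d : EuclideanSpace ℝ (Fin 3)) : ℝ :=
  |Matrix.det (Matrix.of ![fun i => (b - a) i, fun i => (c - a) i, fun i => (d - a) i])| / 6

noncomputable def edgeSq (a b c d : EuclideanSpace ℝ (Fin 3)) : ℝ :=
  dist a b ^ 2 + dist a c ^ 2 + dist a d ^ 2 + dist b c ^ 2 + dist b d ^ 2 + dist c d ^ 2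

noncomputable def tetQ (a b c d : EuclideanSpace ℝ (Fin 3)) : ℝ :=
  if edgeSq a b c d = 0 then 0
  else 72 * Real.sqrt 3 * tetVol a b c d / (edgeSq a b c d) ^ ((3:ℝ)/2)

lemma cs3 (p0 p1 p2 c0 c1 c2 : ℝ) :
    (p0*c0+p1*c1+p2*c2)^2 ≤ (p0^2+p1^2+p2^2)*(c0^2+c1^2+c2^2) := by
  nlinarith [sq_nonneg (p0*c1-p1*c0), sq_nonneg (p0*c2-p2*c0), sq_nonneg (p1*c2-p2*c1)]

lemma lag3 (q0 q1 q2 r0 r1 r2 : ℝ) :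
    (q1*r2-q2*r1)^2+(q2*r0-q0*r2)^2+(q0*r1-q1*r0)^2
      ≤ (q0^2+q1^2+q2^2)*(r0^2+r1^2+r2^2) := by
  nlinarith [sq_nonneg (q0*r0+q1*r1+q2*r2)]

lemma amgm3 (x y z : ℝ) (hx : 0 ≤ x) (hy : 0 ≤ y) (hz : 0 ≤ z) :
    27*(x*y*z) ≤ (x+y+z)^3 := by
  nlinarith [sq_nonneg (x-y), sq_nonneg (y-z), sq_nonneg (x-z),
    mul_nonneg hx hy, mul_nonneg hy hz, mul_nonneg hx hz,
    mul_nonneg (mul_nonneg hx hy) hz]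

lemma hadamard3 (p0 p1 p2 q0 q1 q2 r0 r1 r2 : ℝ) :
    (p0*(q1*r2-q2*r1) - p1*(q0*r2-q2*r0) + p2*(q0*r1-q1*r0))^2
      ≤ (p0^2+p1^2+p2^2)*((q0^2+q1^2+q2^2)*(r0^2+r1^2+r2^2)) := by
  have h1 := cs3 p0 p1 p2 (q1*r2-q2*r1) (q2*r0-q0*r2) (q0*r1-q1*r0)
  have h2 := lag3 q0 q1 q2 r0 r1 r2
  have hp : (0:ℝ) ≤ p0^2+p1^2+p2^2 := by positivity
  calc (p0*(q1*r2-q2*r1) - p1*(q0*r2-q2*r0) + p2*(q0*r1-q1*r0))^2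
      = (p0*(q1*r2-q2*r1) + p1*(q2*r0-q0*r2) + p2*(q0*r1-q1*r0))^2 := by ring
    _ ≤ (p0^2+p1^2+p2^2)*((q1*r2-q2*r1)^2+(q2*r0-q0*r2)^2+(q0*r1-q1*r0)^2) := h1
    _ ≤ (p0^2+p1^2+p2^2)*((q0^2+q1^2+q2^2)*(r0^2+r1^2+r2^2)) :=
        mul_le_mul_of_nonneg_left h2 hp

lemma combine_ineq (D P sp sq sr S : ℝ)
    (hP : P^2 ≤ sp*(sq*sr)) (h2 : 27*(sp*sq*sr) ≤ (sp+sq+sr)^3)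
    (e1 : P = 4*D) (e2 : S = sp+sq+sr) : 432 * D^2 ≤ S^3 := by
  have : 27 * P^2 ≤ 27 * (sp*(sq*sr)) := by linarith
  have h432 : 432 * D^2 = 27 * P^2 := by rw [e1]; ring
  rw [h432, e2]
  calc 27 * P^2 ≤ 27 * (sp*(sq*sr)) := this
    _ = 27 * (sp*sq*sr) := by ring
    _ ≤ (sp+sq+sr)^3 := h2

lemma key_real (u0 u1 u2 v0 v1 v2 w0 w1 w2 : ℝ) :
    432 * (u0*(v1*w2-v2*w1) - u1*(v0*w2-v2*w0) + u2*(v0*w1-v1*w0))^2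
      ≤ ((u0^2+u1^2+u2^2)+(v0^2+v1^2+v2^2)+(w0^2+w1^2+w2^2)
        +((v0-u0)^2+(v1-u1)^2+(v2-u2)^2)
        +((w0-u0)^2+(w1-u1)^2+(w2-u2)^2)
        +((w0-v0)^2+(w1-v1)^2+(w2-v2)^2))^3 := by
  refine combine_ineq _
    ((v0+w0-u0)*((u1+w1-v1)*(u2+v2-w2)-(u2+w2-v2)*(u1+v1-w1))
      - (v1+w1-u1)*((u0+w0-v0)*(u2+v2-w2)-(u2+w2-v2)*(u0+v0-w0))
      + (v2+w2-u2)*((u0+w0-v0)*(u1+v1-w1)-(u1+w1-v1)*(u0+v0-w0)))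
    ((v0+w0-u0)^2+(v1+w1-u1)^2+(v2+w2-u2)^2)
    ((u0+w0-v0)^2+(u1+w1-v1)^2+(u2+w2-v2)^2)
    ((u0+v0-w0)^2+(u1+v1-w1)^2+(u2+v2-w2)^2) _
    (hadamard3 _ _ _ _ _ _ _ _ _) (amgm3 _ _ _ (by positivity) (by positivity) (by positivity))
    (by ring) (by ring)

theorem tetQ_mem_Icc (a b c d : EuclideanSpace ℝ (Fin 3)) :
    0 ≤ tetQ a b c d ∧ tetQ a b c d ≤ 1 := by
  have hS0 : 0 ≤ edgeSq a b c d := by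
    unfold edgeSq; positivity
  have hV0 : 0 ≤ tetVol a b c d := by
    unfold tetVol; positivity
  by_cases h : edgeSq a b c d = 0
  · simp [tetQ, h]
  · have hSpos : 0 < edgeSq a b c d := lt_of_le_of_ne hS0 (Ne.symm h)
    have hrpow : (edgeSq a b c d) ^ ((3:ℝ)/2) = Real.sqrt (edgeSq a b c d) ^ 3 := by
      rw [show (3:ℝ)/2 = (1/2 : ℝ) * (3:ℕ) by norm_num, Real.rpow_mul hS0,
        Real.rpow_natCast, ← Real.sqrt_eq_rpow]
    have hrpos : 0 < (edgeSq a b c d) ^ ((3:ℝ)/2) := Real.rpow_pos_of_pos hSpos _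
    rw [tetQ, if_neg h]
    constructor
    · apply div_nonneg _ hrpos.le
      have := Real.sqrt_nonneg 3
      positivity
    · rw [div_le_one hrpos, hrpow]
      have hsq : (72 * Real.sqrt 3 * tetVol a b c d)^2
          ≤ (Real.sqrt (edgeSq a b c d) ^ 3)^2 := by
        have h3 : Real.sqrt 3 ^ 2 = 3 := Real.sq_sqrt (by norm_num)
        have hs : Real.sqrt (edgeSq a b c d) ^ 2 = edgeSq a b c d := Real.sq_sqrt hS0
        have hdist : ∀ x y : EuclideanSpace ℝ (Fin 3),
            dist x y ^ 2 = (x 0 - y 0)^2 + (x 1 - y 1)^2 + (x 2 - y 2)^2 := by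
          intro x y
          rw [EuclideanSpace.dist_eq, Real.sq_sqrt (by positivity)]
          simp [Fin.sum_univ_three, Real.dist_eq, sq_abs]
        have hSexp : edgeSq a b c d =
            (((b 0 - a 0)^2+(b 1 - a 1)^2+(b 2 - a 2)^2)
          + ((c 0 - a 0)^2+(c 1 - a 1)^2+(c 2 - a 2)^2)
          + ((d 0 - a 0)^2+(d 1 - a 1)^2+(d 2 - a 2)^2)
          + (((c 0 - a 0)-(b 0 - a 0))^2+((c 1 - a 1)-(b 1 - a 1))^2+((c 2 - a 2)-(b 2 - a 2))^2)
          + (((d 0 - a 0)-(b 0 - a 0))^2+((d 1 - a 1)-(b 1 - a 1))^2+((d 2 - a 2)-(b 2 - a 2))^2)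
          + (((d 0 - a 0)-(c 0 - a 0))^2+((d 1 - a 1)-(c 1 - a 1))^2+((d 2 - a 2)-(c 2 - a 2))^2)) := by
          unfold edgeSq
          rw [hdist, hdist, hdist, hdist, hdist, hdist]
          ring
        have hVexp : tetVol a b c d =
            |(b 0 - a 0)*((c 1 - a 1)*(d 2 - a 2)-(c 2 - a 2)*(d 1 - a 1))
            - (b 1 - a 1)*((c 0 - a 0)*(d 2 - a 2)-(c 2 - a 2)*(d 0 - a 0))
            + (b 2 - a 2)*((c 0 - a 0)*(d 1 - a 1)-(c 1 - a 1)*(d 0 - a 0))| / 6 := by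
          unfold tetVol
          congr 2
          rw [Matrix.det_fin_three]
          simp [PiLp.sub_apply]
          ring
        have hkey := key_real (b 0 - a 0) (b 1 - a 1) (b 2 - a 2)
          (c 0 - a 0) (c 1 - a 1) (c 2 - a 2) (d 0 - a 0) (d 1 - a 1) (d 2 - a 2)
        set D := (b 0 - a 0)*((c 1 - a 1)*(d 2 - a 2)-(c 2 - a 2)*(d 1 - a 1))
            - (b 1 - a 1)*((c 0 - a 0)*(d 2 - a 2)-(c 2 - a 2)*(d 0 - a 0))
            + (b 2 - a 2)*((c 0 - a 0)*(d 1 - a 1)-(c 1 - a 1)*(d 0 - a 0)) with hD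
        calc (72 * Real.sqrt 3 * tetVol a b c d)^2
            = 72^2 * 3 * tetVol a b c d ^ 2 := by
              rw [mul_pow, mul_pow, h3]; try ring
          _ = 432 * D^2 := by
              rw [hVexp, div_pow, sq_abs]; ring
          _ ≤ (edgeSq a b c d)^3 := by rw [hSexp]; exact hkey
          _ = (Real.sqrt (edgeSq a b c d) ^ 3)^2 := by
              rw [← pow_mul, show 3*2 = 2*3 by ring, pow_mul, hs]
      have h1 : 0 ≤ 72 * Real.sqrt 3 * tetVol a b c d := by
        have := Real.sqrt_nonneg 3
        positivity
      have h2 : 0 ≤ Real.sqrt (edgeSq a b c d) ^ 3 := by positivity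
      have := Real.sqrt_le_sqrt hsq
      rwa [Real.sqrt_sq h1, Real.sqrt_sq h2] at this
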